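/- Let p be prime, k ≥ 1, n a positive integer with gcd(n, p) = 1, and R_k = Z_p[u]/(u^k). Let C be the cyclic code of length n over R_k given by C = <g(x), u·a1(x), u^2·a2(x), ..., u^{k-1}·a_{k-1}(x)> where a_{k-1}(x) | a_{k-2}(x) | ... | a1(x) | g(x) | (x^n - 1) in Z_p[x]. Then C is the principal ideal generated by g(x) + u·a1(x) + u^2·a2(x) + ... + u^{k-1}·a_{k-1}(x). -/

import Mathlib

open Polynomial

noncomputable section

/-- `Ru p k` is the ring `R_k = Z_p[u]/(u^k)`. -/
abbrev Ru (p k : ℕ) : Type := Polynomial (ZMod p) ⧸ Ideal.span {(X : Polynomial (ZMod p)) ^ k}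

instance instCommRingRu (p k : ℕ) : CommRing (Ru p k) := Ideal.Quotient.commRing _

/-- The element `u` of `Ru p k`. -/
abbrev uR (p k : ℕ) : Ru p k := Ideal.Quotient.mk _ (X : Polynomial (ZMod p))

/-- `Rn p k n` is the ring `R_k[x]/(x^n - 1)`; its ideals are the cyclic codes of length `n`. -/
abbrev Rn (p k n : ℕ) : Type :=
  Polynomial (Ru p k) ⧸ Ideal.span {(X : Polynomial (Ru p k)) ^ n - 1}

/-- The natural ring map `Z_p[x] → R_k[x]/(x^n - 1)`. -/
abbrev liftP (p k n : ℕ) : Polynomial (ZMod p) →+* Rn p k n :=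
  (Ideal.Quotient.mk _).comp (mapRingHom (algebraMap (ZMod p) (Ru p k)))

/-- `u` as an element of `R_k[x]/(x^n - 1)`. -/
abbrev uu (p k n : ℕ) : Rn p k n := Ideal.Quotient.mk _ (C (uR p k))

/-- `x` as an element of `R_k[x]/(x^n - 1)`. -/
abbrev xx (p k n : ℕ) : Rn p k n := Ideal.Quotient.mk _ (X : Polynomial (Ru p k))

/-!
Since `gcd(n, p) = 1`, `xⁿ - 1` is separable over `Z_p`, so each `aᵢ` is coprime to `(xⁿ - 1)/aᵢ`,
and a Bézout relation yields `εᵢ ∈ (aᵢ)` acting as the identity on every multiple of `aᵢ`, in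
particular on `a₀, …, aᵢ`. Let `T = ∑ uʲ aⱼ` and `I = (uⁱ aᵢ)ᵢ`. Multiplying `T` by `εᵢ` fixes its
first `i + 1` terms and sends the others, which carry the factor `u^(i+1) aᵢ`, into `u I`; hence
every partial sum of `T` lies in `(T) + u I`, so do their differences `uⁱ aᵢ`, and `I ≤ (T) + u I`.
As `u` is nilpotent, `I ≤ (T)`.
-/

theorem Ideal.le_of_le_sup_span_singleton_mul {S : Type*} [CommSemiring S] {I J : Ideal S}
    {u : S} (hu : IsNilpotent u) (h : I ≤ J ⊔ Ideal.span {u} * I) : I ≤ J := by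
  have key : ∀ m, I ≤ J ⊔ Ideal.span {u ^ m} * I := by
    intro m
    induction m with
    | zero => simp
    | succ m ih =>
      calc I ≤ J ⊔ Ideal.span {u ^ m} * (J ⊔ Ideal.span {u} * I) :=
            ih.trans (sup_le_sup_left (Ideal.mul_mono_right h) _)
        _ ≤ J ⊔ Ideal.span {u ^ (m + 1)} * I := by
            rw [Ideal.mul_sup, ← mul_assoc, Ideal.span_singleton_mul_span_singleton, ← pow_succ,
              ← sup_assoc]
            exact sup_le_sup_right (sup_le le_rfl Ideal.mul_le_right) _
  obtain ⟨k, hk⟩ := hu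
  simpa [hk] using key k

theorem dvd_of_le_of_forall_succ_dvd {M : Type*} [Monoid M] {a : ℕ → M} {k : ℕ}
    (h : ∀ i, i + 1 < k → a (i + 1) ∣ a i) {i j : ℕ} (hji : j ≤ i) (hik : i < k) :
    a i ∣ a j := by
  induction i, hji using Nat.le_induction with
  | base => rfl
  | succ i hji ih => exact (h i hik).trans (ih (by omega))

theorem exists_mem_span_mul_eq_self_of_dvd {A S : Type*} [CommRing A] [Ring S] (φ : A →+* S)
    {a d : A} (hcop : IsCoprime a d) (had : φ (a * d) = 0) :
    ∃ ε ∈ Ideal.span {φ a}, ∀ b, a ∣ b → ε * φ b = φ b := by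
  obtain ⟨α, β, hαβ⟩ := hcop
  refine ⟨φ (α * a), map_mul φ α a ▸ Ideal.mul_mem_left _ _ (Ideal.mem_span_singleton_self _), ?_⟩
  rintro _ ⟨c, rfl⟩
  rw [← map_mul,
    show α * a * (a * c) = a * c - β * c * (a * d) by linear_combination (a * c) * hαβ,
    map_sub, map_mul φ _ (a * d), had, mul_zero, sub_zero]

section CyclicCode

variable {S : Type*} [CommRing S] (u : S) (g : ℕ → S) (k : ℕ)

theorem sum_range_succ_sub_mul_sum_mem_span_mul {i : ℕ} (hik : i < k) {ε : S}
    (hε : ε ∈ Ideal.span {g i}) (hεg : ∀ j ≤ i, ε * g j = g j) :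
    ∑ j ∈ Finset.range (i + 1), u ^ j * g j - ε * ∑ j ∈ Finset.range k, u ^ j * g j ∈
      Ideal.span {u} * Ideal.span {c | ∃ i < k, c = u ^ i * g i} := by
  obtain ⟨c, rfl⟩ := Ideal.mem_span_singleton'.mp hε
  obtain ⟨m, rfl⟩ : ∃ m, k = i + 1 + m := ⟨k - (i + 1), by omega⟩
  have head : ∑ j ∈ Finset.range (i + 1), c * g i * (u ^ j * g j) =
      ∑ j ∈ Finset.range (i + 1), u ^ j * g j :=
    Finset.sum_congr rfl fun j hj => by
      rw [mul_left_comm, hεg j (Nat.lt_succ_iff.mp (Finset.mem_range.mp hj))]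
  rw [Finset.sum_range_add _ (i + 1) m, mul_add, Finset.mul_sum, Finset.mul_sum, head,
    sub_add_cancel_left]
  refine neg_mem (Ideal.sum_mem _ fun j _ => ?_)
  have hgen : u ^ i * g i ∈ Ideal.span {c | ∃ i' < i + 1 + m, c = u ^ i' * g i'} :=
    Ideal.subset_span ⟨i, by omega, rfl⟩
  rw [show c * g i * (u ^ (i + 1 + j) * g (i + 1 + j)) =
      u * (u ^ i * g i) * (c * u ^ j * g (i + 1 + j)) by ring]
  exact Ideal.mul_mem_right _ _ (Ideal.mul_mem_mul (Ideal.mem_span_singleton_self u) hgen)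

theorem span_pow_mul_eq_span_sum (hu : IsNilpotent u)
    (hε : ∀ i < k, ∃ ε ∈ Ideal.span {g i}, ∀ j ≤ i, ε * g j = g j) :
    Ideal.span {c | ∃ i < k, c = u ^ i * g i} =
      Ideal.span {∑ i ∈ Finset.range k, u ^ i * g i} := by
  set I := Ideal.span {c | ∃ i < k, c = u ^ i * g i}
  set T := ∑ i ∈ Finset.range k, u ^ i * g i
  apply le_antisymm
  · refine Ideal.le_of_le_sup_span_singleton_mul hu ?_
    have hsum : ∀ m ≤ k,
        ∑ j ∈ Finset.range m, u ^ j * g j ∈ Ideal.span {T} ⊔ Ideal.span {u} * I := by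
      rintro (_ | i) hi
      · simp
      · obtain ⟨ε, hεI, hεg⟩ := hε i hi
        rw [← sub_add_cancel (∑ j ∈ Finset.range (i + 1), u ^ j * g j) (ε * T)]
        exact add_mem
          (Ideal.mem_sup_right (sum_range_succ_sub_mul_sum_mem_span_mul u g k hi hεI hεg))
          (Ideal.mem_sup_left (Ideal.mul_mem_left _ _ (Ideal.mem_span_singleton_self T)))
    rw [Ideal.span_le]
    rintro _ ⟨i, hi, rfl⟩
    rw [SetLike.mem_coe]
    convert sub_mem (hsum _ hi) (hsum _ hi.le) using 1
    rw [Finset.sum_range_succ, add_sub_cancel_left]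
  · rw [Ideal.span_le, Set.singleton_subset_iff]
    exact Ideal.sum_mem _ fun i hi => Ideal.subset_span ⟨i, Finset.mem_range.mp hi, rfl⟩

end CyclicCode

theorem uu_pow_eq_zero (p k n : ℕ) : uu p k n ^ k = 0 := by
  rw [← map_pow, ← map_pow, ← map_pow (Ideal.Quotient.mk _),
    Ideal.Quotient.eq_zero_iff_mem.mpr (Ideal.mem_span_singleton_self _), map_zero, map_zero]

theorem liftP_X_pow_sub_one (p k n : ℕ) : liftP p k n (X ^ n - 1) = 0 := by
  rw [RingHom.comp_apply, Ideal.Quotient.eq_zero_iff_mem]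
  exact Ideal.subset_span (by simp)

theorem stmt3_general (p k n : ℕ) (hp : p.Prime)
    (hco : Nat.Coprime n p)
    (a : ℕ → Polynomial (ZMod p)) (Ck : Ideal (Rn p k n))
    (hchain : ∀ i, i + 1 < k → a (i + 1) ∣ a i)
    (hg : a 0 ∣ (X : Polynomial (ZMod p)) ^ n - 1)
    (hC : Ck = Ideal.span {c | ∃ i < k, c = uu p k n ^ i * liftP p k n (a i)}) :
    Ck = Ideal.span {∑ i ∈ Finset.range k, uu p k n ^ i * liftP p k n (a i)} := by
  have : Fact p.Prime := ⟨hp⟩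
  have hsep : (X ^ n - 1 : (ZMod p)[X]).Separable := by
    rw [X_pow_sub_one_separable_iff, Ne, ZMod.natCast_eq_zero_iff]
    exact fun hpn => hp.one_lt.ne' (hco.symm.eq_one_of_dvd hpn)
  rw [hC]
  refine span_pow_mul_eq_span_sum _ (fun i => liftP p k n (a i)) k ⟨k, uu_pow_eq_zero p k n⟩ ?_
  intro i hi
  obtain ⟨d, hd⟩ := (dvd_of_le_of_forall_succ_dvd hchain i.zero_le hi).trans hg
  have hφ : liftP p k n (a i * d) = 0 := hd ▸ liftP_X_pow_sub_one p k n
  obtain ⟨ε, hεI, hεg⟩ := exists_mem_span_mul_eq_self_of_dvd _ (hd ▸ hsep).isCoprime hφ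
  exact ⟨ε, hεI, fun j hji => hεg _ (dvd_of_le_of_forall_succ_dvd hchain hji hi)⟩

/-- Over `R_k = Z_p[u]/(u^k)` with `gcd(n,p) = 1`, if
`C = <a_0(x), u a_1(x), ..., u^{k-1} a_{k-1}(x)>` (where `a_0 = g`) with
`a_{k-1} ∣ a_{k-2} ∣ ... ∣ a_1 ∣ a_0 = g ∣ x^n - 1` in `Z_p[x]`, then
`C = <a_0(x) + u a_1(x) + ... + u^{k-1} a_{k-1}(x)>`. -/
theorem stmt3 (p k n : ℕ) (hp : p.Prime) (hk : 1 ≤ k) (hn : 0 < n)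
    (hco : Nat.Coprime n p)
    (a : ℕ → Polynomial (ZMod p)) (Ck : Ideal (Rn p k n))
    (hchain : ∀ i, i + 1 < k → a (i + 1) ∣ a i)
    (hg : a 0 ∣ (X : Polynomial (ZMod p)) ^ n - 1)
    (hC : Ck = Ideal.span {c | ∃ i < k, c = uu p k n ^ i * liftP p k n (a i)}) :
    Ck = Ideal.span {∑ i ∈ Finset.range k, uu p k n ^ i * liftP p k n (a i)} :=
  stmt3_general p k n hp hco a Ck hchain hg hC
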